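/- Let 0 < γ < δ be real parameters and define ℓ : ℝ → ℝ by: ℓ(φ) = δ[γ²/(δ−γ) + (φ+γ)·(−γ(−γ+2δ))/(δ−γ)²] for φ ≤ −γ; ℓ(φ) = δ φ²/(φ+δ) for −γ < φ < 0; and ℓ(φ) = 0 for φ ≥ 0. Then ℓ is continuously differentiable on all of ℝ, convex, nonnegative, and nonincreasing. -/

import Mathlib

/-!
The outer branches of `ℓ` are the tangent lines of the middle branch `δ φ² / (φ + δ)` at `-γ`
and at `0`, so `ℓ` is differentiable with derivative `ℓ' φ = m (clamp φ)`, where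
`m y = δ - δ³ / (y + δ)²` is the derivative of the middle branch and `clamp` projects onto
`[-γ, 0]`. Since `m` is continuous and increasing on `(-δ, ∞) ⊇ [-γ, 0]` and `m 0 = 0`, the
derivative `ℓ'` is continuous, nondecreasing and nonpositive; this gives `C¹`, convexity and
monotonicity, and `ℓ ≥ ℓ 0 = 0`.
-/

open Set

section

variable {𝕜 F : Type*} [NontriviallyNormedField 𝕜] [NormedAddCommGroup F] [NormedSpace 𝕜 F]

theorem IsClosed.hasDerivWithinAt_of_eqOn {s : Set 𝕜} (hs : IsClosed s) {f g g' : 𝕜 → F}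
    (hfg : EqOn f g s) (hg : ∀ x ∈ s, HasDerivAt g (g' x) x) (x : 𝕜) :
    HasDerivWithinAt f (g' x) s x := by
  by_cases hx : x ∈ s
  · exact (hg x hx).hasDerivWithinAt.congr hfg (hfg hx)
  · exact HasFDerivWithinAt.of_notMem_closure (by rwa [hs.closure_eq])

end

noncomputable section

def limiter (γ δ φ : ℝ) : ℝ :=
  if φ ≤ -γ then
    δ * (γ^2 / (δ - γ) + (φ + γ) * (-γ * (-γ + 2*δ)) / (δ - γ)^2)
  else if φ < 0 then
    δ * φ^2 / (φ + δ)
  else 0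

def limiterSlope (δ y : ℝ) : ℝ := δ - δ ^ 3 / (y + δ) ^ 2

def limiterDeriv (γ δ φ : ℝ) : ℝ := limiterSlope δ (max (-γ) (min φ 0))

variable {γ δ : ℝ}

theorem hasDerivAt_mul_sq_div_add {x : ℝ} (hx : x + δ ≠ 0) :
    HasDerivAt (fun y => δ * y ^ 2 / (y + δ)) (limiterSlope δ x) x := by
  have h := (((hasDerivAt_pow 2 x).const_mul δ).div ((hasDerivAt_id' x).add_const δ) hx)
  refine h.congr_deriv ?_
  unfold limiterSlope
  field_simp
  ring

theorem limiterSlope_neg (hγδ : γ < δ) :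
    limiterSlope δ (-γ) = δ * (-γ * (-γ + 2*δ)) / (δ - γ)^2 := by
  have : δ - γ ≠ 0 := by linarith
  unfold limiterSlope
  rw [neg_add_eq_sub]
  field_simp
  ring

theorem limiterSlope_zero (hδ : δ ≠ 0) : limiterSlope δ 0 = 0 := by
  rw [limiterSlope, zero_add, pow_succ, mul_div_cancel_left₀ _ (pow_ne_zero 2 hδ), sub_self]

theorem monotoneOn_limiterSlope (hδ : 0 ≤ δ) : MonotoneOn (limiterSlope δ) (Ioi (-δ)) := by
  intro a ha b _ hab
  have ha' : 0 < a + δ := by simp only [mem_Ioi] at ha; linarith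
  unfold limiterSlope
  gcongr

theorem limiter_eqOn_Iic :
    EqOn (limiter γ δ)
      (fun φ => δ * (γ^2 / (δ - γ) + (φ + γ) * (-γ * (-γ + 2*δ)) / (δ - γ)^2)) (Iic (-γ)) :=
  fun _ hφ => if_pos hφ

theorem limiter_eqOn_Icc (hγ : 0 < γ) :
    EqOn (limiter γ δ) (fun φ => δ * φ ^ 2 / (φ + δ)) (Icc (-γ) 0) := by
  rintro φ ⟨hγφ, hφ0⟩
  rcases hγφ.eq_or_lt with rfl | hγφ
  · show limiter γ δ (-γ) = δ * (-γ) ^ 2 / (-γ + δ)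
    rw [limiter, if_pos le_rfl, neg_add_cancel, zero_mul, zero_div, add_zero, neg_sq,
      neg_add_eq_sub, mul_div_assoc]
  rcases hφ0.eq_or_lt with rfl | hφ0
  · simp [limiter, hγ.not_ge]
  · simp [limiter, hγφ.not_ge, hφ0]

theorem limiter_eqOn_Ici (hγ : 0 < γ) : EqOn (limiter γ δ) 0 (Ici 0) := by
  intro φ hφ
  have hφ' : ¬φ ≤ -γ := by rw [mem_Ici] at hφ; linarith
  rw [limiter, if_neg hφ', if_neg (not_lt.2 hφ)]
  rfl

theorem limiterDeriv_of_le {φ : ℝ} (hφ : φ ≤ -γ) : limiterDeriv γ δ φ = limiterSlope δ (-γ) := by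
  rw [limiterDeriv, max_eq_left ((min_le_left φ 0).trans hφ)]

theorem limiterDeriv_of_mem_Icc {φ : ℝ} (hφ : φ ∈ Icc (-γ) 0) :
    limiterDeriv γ δ φ = limiterSlope δ φ := by
  rw [limiterDeriv, min_eq_left hφ.2, max_eq_right hφ.1]

theorem limiterDeriv_of_nonneg (hγ : 0 < γ) (hγδ : γ < δ) {φ : ℝ} (hφ : 0 ≤ φ) :
    limiterDeriv γ δ φ = 0 := by
  rw [limiterDeriv, min_eq_right hφ, max_eq_right (by linarith),
    limiterSlope_zero (by linarith)]

theorem hasDerivAt_limiter (hγ : 0 < γ) (hγδ : γ < δ) (φ : ℝ) :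
    HasDerivAt (limiter γ δ) (limiterDeriv γ δ φ) φ := by
  have hleft : HasDerivWithinAt (limiter γ δ) (limiterDeriv γ δ φ) (Iic (-γ)) φ := by
    refine isClosed_Iic.hasDerivWithinAt_of_eqOn limiter_eqOn_Iic (fun y hy => ?_) φ
    rw [limiterDeriv_of_le hy, limiterSlope_neg hγδ]
    refine (((((hasDerivAt_id y).add_const γ).mul_const _).div_const _).const_add _).const_mul δ
      |>.congr_deriv ?_
    ring
  have hmid : HasDerivWithinAt (limiter γ δ) (limiterDeriv γ δ φ) (Icc (-γ) 0) φ := by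
    refine isClosed_Icc.hasDerivWithinAt_of_eqOn (limiter_eqOn_Icc hγ) (fun y hy => ?_) φ
    rw [limiterDeriv_of_mem_Icc hy]
    exact hasDerivAt_mul_sq_div_add (by linarith [hy.1])
  have hright : HasDerivWithinAt (limiter γ δ) (limiterDeriv γ δ φ) (Ici 0) φ := by
    refine isClosed_Ici.hasDerivWithinAt_of_eqOn (limiter_eqOn_Ici hγ) (fun y hy => ?_) φ
    rw [limiterDeriv_of_nonneg hγ hγδ hy]
    exact hasDerivAt_const y 0
  have h := (hleft.union hmid).union hright
  rwa [Iic_union_Icc_eq_Iic (by linarith), Iic_union_Ici, hasDerivWithinAt_univ] at h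

theorem monotone_limiterDeriv (hγ : 0 < γ) (hγδ : γ < δ) : Monotone (limiterDeriv γ δ) := by
  intro a b hab
  have hmem : ∀ φ, max (-γ) (min φ 0) ∈ Ioi (-δ) := fun φ =>
    lt_max_of_lt_left (neg_lt_neg hγδ)
  exact monotoneOn_limiterSlope (by linarith) (hmem a) (hmem b)
    (max_le_max le_rfl (min_le_min hab le_rfl))

theorem continuous_limiterDeriv (hγδ : γ < δ) : Continuous (limiterDeriv γ δ) := by
  refine continuous_iff_continuousAt.2 fun φ => ContinuousAt.comp (g := limiterSlope δ) ?_
    (by fun_prop : Continuous fun φ : ℝ => max (-γ) (min φ 0)).continuousAt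
  have hpos : max (-γ) (min φ 0) + δ ≠ 0 := by
    have := le_max_left (-γ) (min φ 0)
    linarith
  exact continuousAt_const.sub (continuousAt_const.div (by fun_prop) (pow_ne_zero 2 hpos))

theorem limiterDeriv_nonpos (hγ : 0 < γ) (hγδ : γ < δ) (φ : ℝ) : limiterDeriv γ δ φ ≤ 0 :=
  (monotone_limiterDeriv hγ hγδ (le_max_left φ 0)).trans_eq
    (limiterDeriv_of_nonneg hγ hγδ (le_max_right φ 0))

end

/-- Properties of the limiter function (equation (20)): for `0 < γ < δ`, the piecewise
function `ℓ` defined by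
`ℓ(φ) = δ[γ²/(δ-γ) + (φ+γ)(-γ(-γ+2δ))/(δ-γ)²]` for `φ ≤ -γ`,
`ℓ(φ) = δφ²/(φ+δ)` for `-γ < φ < 0`, and `ℓ(φ) = 0` for `φ ≥ 0`,
is continuously differentiable on all of `ℝ`, convex, nonnegative, and nonincreasing. -/
theorem stmt_14 (γ δ : ℝ) (hγ : 0 < γ) (hγδ : γ < δ) (ℓ : ℝ → ℝ)
    (hℓ : ∀ φ : ℝ, ℓ φ =
      if φ ≤ -γ then
        δ * (γ^2 / (δ - γ) + (φ + γ) * (-γ * (-γ + 2*δ)) / (δ - γ)^2)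
      else if φ < 0 then
        δ * φ^2 / (φ + δ)
      else 0) :
    ContDiff ℝ 1 ℓ ∧ ConvexOn ℝ Set.univ ℓ ∧ (∀ x, 0 ≤ ℓ x) ∧ Antitone ℓ := by
  obtain rfl : ℓ = limiter γ δ := funext hℓ
  have hdiff : Differentiable ℝ (limiter γ δ) := fun φ =>
    (hasDerivAt_limiter hγ hγδ φ).differentiableAt
  have hderiv : deriv (limiter γ δ) = limiterDeriv γ δ :=
    funext fun φ => (hasDerivAt_limiter hγ hγδ φ).deriv
  have hanti : Antitone (limiter γ δ) :=
    antitone_of_deriv_nonpos hdiff fun φ => hderiv ▸ limiterDeriv_nonpos hγ hγδ φ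
  refine ⟨contDiff_one_iff_deriv.2 ⟨hdiff, hderiv ▸ continuous_limiterDeriv hγδ⟩,
    (hderiv ▸ monotone_limiterDeriv hγ hγδ).convexOn_univ_of_deriv hdiff, fun φ => ?_, hanti⟩
  calc 0 = limiter γ δ (max φ 0) := (limiter_eqOn_Ici hγ (le_max_right φ 0)).symm
    _ ≤ limiter γ δ φ := hanti (le_max_left φ 0)
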